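/- Under the assumptions of NGN-D convergence plus the Polyak–Łojasiewicz condition ‖∇f(x)‖² ≥ 2μ(f(x) − f*), if additionally c_j ≤ min{1/(2L_j), 6/μ} for all j, then E[f(x^K) − f*] ≤ (1 − μ c_min/6)^K (f(x^0) − f*) + (9/(μ c_min)) Σ_{j=1}^d L_j c_j² σ_j². -/

import Mathlib

/-!
Nonnegativity and coordinate-wise smoothness of each `f_i` give `(∂_j f_i)² ≤ 2 L_j f_i`, so the
NGN step size `γ_j` lies in `[c_j - L_j c_j², c_j]`. An NGN-D step is therefore a coordinate-wise
SGD step with step sizes `c_j`, up to an error costing at most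
`L_j c_j² ((∂_j f_i)² + (∂_j f)²) / 2`.
Averaging over the sample, the variance bound and `c_j L_j ≤ 1/2` give the expected descent
`E f(x⁺) ≤ f(x) - (c_min / 4) ‖∇f(x)‖² + Σ_j L_j c_j² σ_j²`, which the PŁ inequality turns into the
contraction `E[f(x⁺) - f*] ≤ ρ (f(x) - f*) + Σ_j L_j c_j² σ_j²`, even with `1 - μ c_min / 2` in
place of `ρ = 1 - μ c_min / 6`; `c_j ≤ 6 / μ` makes `ρ ≥ 0`. Unrolling it along the sample paths
gives the bound, with `1 / (1 - ρ) = 6 / (μ c_min)` from the geometric series.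
-/

open RealInnerProductSpace Finset

noncomputable def ngnStepSize (c F g : ℝ) : ℝ := c / (1 + c / (2 * F) * g ^ 2)

section NGNStepSize

variable {c F g L : ℝ}

lemma ngnStepSize_nonneg (hc : 0 ≤ c) (hF : 0 ≤ F) : 0 ≤ ngnStepSize c F g := by
  unfold ngnStepSize; positivity

lemma ngnStepSize_le (hc : 0 ≤ c) (hF : 0 ≤ F) : ngnStepSize c F g ≤ c :=
  div_le_self hc (le_add_of_nonneg_right (by positivity))

lemma sub_ngnStepSize_le (hc : 0 ≤ c) (hL : 0 ≤ L) (hg : g ^ 2 ≤ 2 * L * F) :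
    c - ngnStepSize c F g ≤ L * c ^ 2 := by
  set q := c / (2 * F) * g ^ 2
  have hq : 0 ≤ q ∧ q ≤ c * L := by
    rcases le_or_gt F 0 with hF | hF
    · have : g = 0 := by nlinarith [sq_nonneg g]
      simp [q, this, mul_nonneg hc hL]
    · refine ⟨by positivity, ?_⟩
      rw [show q = c * g ^ 2 / (2 * F) by ring, div_le_iff₀ (by positivity)]
      nlinarith
  have hq1 : 0 < 1 + q := by linarith
  calc c - c / (1 + q) = c * q / (1 + q) := by field_simp; ring
    _ ≤ c * q := div_le_self (mul_nonneg hc hq.1) (by linarith)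
    _ ≤ L * c ^ 2 := by nlinarith [mul_le_mul_of_nonneg_left hq.2 hc]

/-- The error of a step `γ ∈ [c - L c², c]` against the exact step `c` is paid for by the
quadratic terms, via `2 g w ≤ g² + w²`. -/
lemma inexact_coord_step_le {γ w : ℝ} (hL : 0 ≤ L) (hγ0 : 0 ≤ γ) (hγc : γ ≤ c)
    (hγL : c - γ ≤ L * c ^ 2) :
    w * -(γ * g) + 1 / 2 * (L * (γ * g) ^ 2) ≤
      -(c * w * g) + L * c ^ 2 * g ^ 2 + L * c ^ 2 / 2 * w ^ 2 := by
  have hcross : (c - γ) * (w * g) ≤ L * c ^ 2 * ((w ^ 2 + g ^ 2) / 2) :=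
    calc (c - γ) * (w * g) ≤ (c - γ) * ((w ^ 2 + g ^ 2) / 2) :=
          mul_le_mul_of_nonneg_left (by nlinarith [sq_nonneg (w - g)]) (by linarith)
      _ ≤ L * c ^ 2 * ((w ^ 2 + g ^ 2) / 2) :=
          mul_le_mul_of_nonneg_right hγL (by positivity)
  have hsq : L * (γ * g) ^ 2 ≤ L * (c * g) ^ 2 :=
    mul_le_mul_of_nonneg_left (by rw [mul_pow, mul_pow]; gcongr) hL
  nlinarith

end NGNStepSize

lemma sum_sq_eq_sum_sq_sub_add {ι : Type*} [Fintype ι] (a : ι → ℝ) {w : ℝ}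
    (hw : ∑ i, a i = Fintype.card ι * w) :
    ∑ i, a i ^ 2 = ∑ i, (a i - w) ^ 2 + Fintype.card ι * w ^ 2 := by
  simp only [sub_sq, sum_add_distrib, sum_sub_distrib, ← sum_mul, ← mul_sum, hw, sum_const,
    card_univ, nsmul_eq_mul]
  ring

lemma sum_coord_step_le {ι : Type*} [Fintype ι] {c L cmin σ w : ℝ} (a : ι → ℝ)
    (hc : 0 ≤ c) (hL : 0 < L) (hcL : c ≤ 1 / (2 * L)) (hcmin : cmin ≤ c)
    (hmean : ∑ i, a i = Fintype.card ι * w)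
    (hvar : ∑ i, (a i - w) ^ 2 ≤ Fintype.card ι * σ ^ 2) :
    ∑ i, (-(c * w * a i) + L * c ^ 2 * a i ^ 2 + L * c ^ 2 / 2 * w ^ 2) ≤
      Fintype.card ι * (-(cmin / 4) * w ^ 2 + L * c ^ 2 * σ ^ 2) := by
  set n : ℝ := (Fintype.card ι : ℝ)
  have hnw : 0 ≤ n * w ^ 2 := by positivity
  have hLc : L * c ^ 2 ≤ c / 2 := by
    have := mul_le_mul_of_nonneg_left ((le_div_iff₀ (by positivity)).1 hcL) hc
    linarith
  have hsum : ∑ i, (-(c * w * a i) + L * c ^ 2 * a i ^ 2 + L * c ^ 2 / 2 * w ^ 2) =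
      -(c * w * (n * w)) + L * c ^ 2 * (∑ i, (a i - w) ^ 2 + n * w ^ 2) +
        n * (L * c ^ 2 / 2 * w ^ 2) := by
    rw [← hmean, ← sum_sq_eq_sum_sq_sub_add a hmean]
    simp only [sum_add_distrib, ← mul_sum, sum_neg_distrib, sum_const, card_univ, nsmul_eq_mul,
      n]
    ring
  rw [hsum]
  nlinarith [mul_le_mul_of_nonneg_left hvar (by positivity : 0 ≤ L * c ^ 2),
    mul_nonneg hnw (sub_nonneg.2 hcmin), mul_nonneg hnw (sub_nonneg.2 hLc)]

lemma hasGradientAt_average {ι F : Type*} [Fintype ι] [NormedAddCommGroup F]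
    [InnerProductSpace ℝ F] [CompleteSpace F] {φ : ι → F → ℝ} {g : ι → F} {x : F}
    (h : ∀ i, HasGradientAt (φ i) (g i) x) :
    HasGradientAt (fun y => (∑ i, φ i y) / Fintype.card ι)
      ((Fintype.card ι : ℝ)⁻¹ • ∑ i, g i) x := by
  rw [hasGradientAt_iff_hasFDerivAt, map_smul, map_sum]
  simp_rw [div_eq_inv_mul]
  exact (HasFDerivAt.fun_sum fun i _ => (h i).hasFDerivAt).const_mul _

section CoordSmooth

variable {κ : Type*} [Fintype κ]

def CoordSmooth (φ : EuclideanSpace ℝ κ → ℝ) (g : EuclideanSpace ℝ κ → EuclideanSpace ℝ κ)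
    (L : κ → ℝ) : Prop :=
  ∀ x h, φ (x + h) ≤ φ x + ⟪g x, h⟫ + (1 / 2) * ∑ j, L j * (h j) ^ 2

lemma CoordSmooth.average {ι : Type*} [Fintype ι] [Nonempty ι] {φ : ι → EuclideanSpace ℝ κ → ℝ}
    {g : ι → EuclideanSpace ℝ κ → EuclideanSpace ℝ κ} {L : κ → ℝ}
    (h : ∀ i, CoordSmooth (φ i) (g i) L) :
    CoordSmooth (fun x => (∑ i, φ i x) / Fintype.card ι)
      (fun x => (Fintype.card ι : ℝ)⁻¹ • ∑ i, g i x) L := by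
  intro x v
  have hn : (0 : ℝ) < Fintype.card ι := Nat.cast_pos.2 Fintype.card_pos
  calc (∑ i, φ i (x + v)) / Fintype.card ι
      ≤ (∑ i, (φ i x + ⟪g i x, v⟫ + 1 / 2 * ∑ j, L j * v j ^ 2)) / Fintype.card ι :=
        div_le_div_of_nonneg_right (sum_le_sum fun i _ => h i x v) hn.le
    _ = _ := by
        simp only [sum_add_distrib, sum_const, card_univ, nsmul_eq_mul, real_inner_smul_left,
          sum_inner]
        field_simp

variable {φ : EuclideanSpace ℝ κ → ℝ} {g : EuclideanSpace ℝ κ → EuclideanSpace ℝ κ} {L : κ → ℝ}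

/-- Otherwise the exact coordinate step `-g_j / L_j` would push `φ` below zero. -/
lemma CoordSmooth.sq_apply_le (hφ : CoordSmooth φ g L) (hφ0 : ∀ y, 0 ≤ φ y) {j : κ}
    (hL : 0 < L j) (x : EuclideanSpace ℝ κ) : g x j ^ 2 ≤ 2 * L j * φ x := by
  classical
  set t := -(g x j / L j)
  have h := hφ x (EuclideanSpace.single j t)
  have hinner : ⟪g x, EuclideanSpace.single j t⟫ = g x j * t := by
    simp [EuclideanSpace.inner_single_right, mul_comm]
  have hquad :
      ∑ i, L i * ((EuclideanSpace.single j t : EuclideanSpace ℝ κ) i) ^ 2 = L j * t ^ 2 := by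
    rw [sum_eq_single j (fun i _ hi => by simp [hi]) (by simp)]
    simp
  rw [hinner, hquad] at h
  have hval : g x j * t + 1 / 2 * (L j * t ^ 2) = -(g x j ^ 2 / (2 * L j)) := by
    simp only [t]; field_simp; ring
  have hdiv : g x j ^ 2 / (2 * L j) ≤ φ x := by linarith [hφ0 (x + EuclideanSpace.single j t)]
  rw [div_le_iff₀ (by positivity)] at hdiv
  linarith

end CoordSmooth

section Descent

variable {κ ι : Type*} [Fintype κ] [Fintype ι]
  {f : EuclideanSpace ℝ κ → ℝ} {gf : EuclideanSpace ℝ κ → EuclideanSpace ℝ κ} {L c : κ → ℝ}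

noncomputable def ngndStep (c : κ → ℝ) (φ : EuclideanSpace ℝ κ → ℝ)
    (g : EuclideanSpace ℝ κ → EuclideanSpace ℝ κ) (x : EuclideanSpace ℝ κ) :
    EuclideanSpace ℝ κ :=
  WithLp.toLp 2 fun j => x j - ngnStepSize (c j) (φ x) (g x j) * g x j

lemma CoordSmooth.apply_ngndStep_le (hf : CoordSmooth f gf L) {φ : EuclideanSpace ℝ κ → ℝ}
    {g : EuclideanSpace ℝ κ → EuclideanSpace ℝ κ} (hφ : CoordSmooth φ g L)
    (hφ0 : ∀ y, 0 ≤ φ y) (hL : ∀ j, 0 < L j) (hc : ∀ j, 0 ≤ c j) (x : EuclideanSpace ℝ κ) :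
    f (ngndStep c φ g x) ≤ f x + ∑ j, (-(c j * gf x j * g x j) + L j * c j ^ 2 * g x j ^ 2 +
      L j * c j ^ 2 / 2 * gf x j ^ 2) := by
  set γ : κ → ℝ := fun j => ngnStepSize (c j) (φ x) (g x j)
  set h : EuclideanSpace ℝ κ := WithLp.toLp 2 fun j => -(γ j * g x j)
  have hstep : ngndStep c φ g x = x + h := by
    ext j; simp [ngndStep, h, γ, sub_eq_add_neg]
  calc f (ngndStep c φ g x) = f (x + h) := by rw [hstep]
    _ ≤ f x + ∑ j, (gf x j * -(γ j * g x j) + 1 / 2 * (L j * (γ j * g x j) ^ 2)) := by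
        refine (hf x h).trans_eq ?_
        simp [h, PiLp.inner_apply, mul_sum, sum_add_distrib, add_assoc, mul_comm]
    _ ≤ _ := add_le_add_right (sum_le_sum fun j _ =>
        inexact_coord_step_le (hL j).le (ngnStepSize_nonneg (hc j) (hφ0 x))
          (ngnStepSize_le (hc j) (hφ0 x))
          (sub_ngnStepSize_le (hc j) (hL j).le (hφ.sq_apply_le hφ0 (hL j) x))) _

lemma CoordSmooth.average_ngndStep_le [Nonempty ι] (hf : CoordSmooth f gf L)
    {φ : ι → EuclideanSpace ℝ κ → ℝ} {g : ι → EuclideanSpace ℝ κ → EuclideanSpace ℝ κ}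
    (hφ : ∀ i, CoordSmooth (φ i) (g i) L) (hφ0 : ∀ i y, 0 ≤ φ i y) (hL : ∀ j, 0 < L j)
    (hc : ∀ j, 0 ≤ c j) (hcL : ∀ j, c j ≤ 1 / (2 * L j)) {cmin : ℝ} (hcmin : ∀ j, cmin ≤ c j)
    {σ : κ → ℝ} {x : EuclideanSpace ℝ κ}
    (hgf : gf x = (Fintype.card ι : ℝ)⁻¹ • ∑ i, g i x)
    (hvar : ∀ j, (∑ i, (g i x j - gf x j) ^ 2) / Fintype.card ι ≤ σ j ^ 2) :
    (∑ i, f (ngndStep c (φ i) (g i) x)) / Fintype.card ι ≤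
      f x - cmin / 4 * ‖gf x‖ ^ 2 + ∑ j, L j * c j ^ 2 * σ j ^ 2 := by
  have hn : (0 : ℝ) < Fintype.card ι := Nat.cast_pos.2 Fintype.card_pos
  have hmean : ∀ j, ∑ i, g i x j = Fintype.card ι * gf x j := fun j => by
    simp [hgf]
  rw [div_le_iff₀' hn]
  calc ∑ i, f (ngndStep c (φ i) (g i) x)
      ≤ ∑ i, (f x + ∑ j, (-(c j * gf x j * g i x j) + L j * c j ^ 2 * g i x j ^ 2 +
          L j * c j ^ 2 / 2 * gf x j ^ 2)) :=
        sum_le_sum fun i _ => hf.apply_ngndStep_le (hφ i) (hφ0 i) hL hc x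
    _ = Fintype.card ι * f x + ∑ j, ∑ i, (-(c j * gf x j * g i x j) +
          L j * c j ^ 2 * g i x j ^ 2 + L j * c j ^ 2 / 2 * gf x j ^ 2) := by
        rw [sum_add_distrib, sum_const, card_univ, nsmul_eq_mul, sum_comm]
    _ ≤ Fintype.card ι * f x +
          ∑ j, Fintype.card ι * (-(cmin / 4) * gf x j ^ 2 + L j * c j ^ 2 * σ j ^ 2) := by
        gcongr with j
        exact sum_coord_step_le (fun i => g i x j) (hc j) (hL j) (hcL j) (hcmin j) (hmean j)
          (by rw [← div_le_iff₀' hn]; exact hvar j)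
    _ = _ := by
        rw [EuclideanSpace.real_norm_sq_eq]
        simp only [← mul_sum, sum_add_distrib]
        ring

lemma CoordSmooth.average_ngndStep_sub_le [Nonempty ι] (hf : CoordSmooth f gf L)
    {φ : ι → EuclideanSpace ℝ κ → ℝ} {g : ι → EuclideanSpace ℝ κ → EuclideanSpace ℝ κ}
    (hφ : ∀ i, CoordSmooth (φ i) (g i) L) (hφ0 : ∀ i y, 0 ≤ φ i y) (hL : ∀ j, 0 < L j)
    (hc : ∀ j, 0 ≤ c j) (hcL : ∀ j, c j ≤ 1 / (2 * L j)) {cmin : ℝ} (hcmin0 : 0 ≤ cmin)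
    (hcmin : ∀ j, cmin ≤ c j) {σ : κ → ℝ} {x : EuclideanSpace ℝ κ}
    (hgf : gf x = (Fintype.card ι : ℝ)⁻¹ • ∑ i, g i x)
    (hvar : ∀ j, (∑ i, (g i x j - gf x j) ^ 2) / Fintype.card ι ≤ σ j ^ 2) {μ fstar : ℝ}
    (hPL : 2 * μ * (f x - fstar) ≤ ‖gf x‖ ^ 2) :
    (∑ i, (f (ngndStep c (φ i) (g i) x) - fstar)) / Fintype.card ι ≤
      (1 - μ * cmin / 2) * (f x - fstar) + ∑ j, L j * c j ^ 2 * σ j ^ 2 := by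
  have hn : (0 : ℝ) < Fintype.card ι := Nat.cast_pos.2 Fintype.card_pos
  have hdescent := hf.average_ngndStep_le hφ hφ0 hL hc hcL hcmin hgf hvar
  rw [sum_sub_distrib, sum_const, card_univ, nsmul_eq_mul, sub_div,
    mul_div_cancel_left₀ _ hn.ne']
  nlinarith [mul_le_mul_of_nonneg_left hPL hcmin0]

end Descent

lemma le_pow_mul_add_div_of_le_mul_add {a : ℕ → ℝ} {ρ B : ℝ} (hρ0 : 0 ≤ ρ) (hρ1 : ρ < 1)
    (hB : 0 ≤ B) (h : ∀ k, a (k + 1) ≤ ρ * a k + B) (K : ℕ) :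
    a K ≤ ρ ^ K * a 0 + B / (1 - ρ) := by
  have hρ : 0 < 1 - ρ := sub_pos.2 hρ1
  induction K with
  | zero => simpa using div_nonneg hB hρ.le
  | succ K ih =>
    calc a (K + 1) ≤ ρ * (ρ ^ K * a 0 + B / (1 - ρ)) + B :=
          (h K).trans (by gcongr)
      _ = ρ ^ (K + 1) * a 0 + B / (1 - ρ) := by field_simp; ring

lemma sum_pi_fin_succ {α M : Type*} [Fintype α] [AddCommMonoid M] {k : ℕ}
    (u : (Fin (k + 1) → α) → M) : ∑ s, u s = ∑ t : Fin k → α, ∑ i, u (Fin.snoc t i) := by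
  rw [← (Fin.snocEquiv fun _ => α).sum_comp, Fintype.sum_prod_type, sum_comm]
  rfl

lemma average_paths_succ_le {ι E : Type*} [Fintype ι] [Nonempty ι]
    {X : ∀ k, (Fin k → ι) → E} {T : ι → E → E}
    (hX : ∀ k t i, X (k + 1) (Fin.snoc t i) = T i (X k t)) {V : E → ℝ} {ρ B : ℝ}
    (hT : ∀ x, (∑ i, V (T i x)) / Fintype.card ι ≤ ρ * V x + B) (k : ℕ) :
    (∑ s, V (X (k + 1) s)) / (Fintype.card ι : ℝ) ^ (k + 1) ≤
      ρ * ((∑ t, V (X k t)) / (Fintype.card ι : ℝ) ^ k) + B := by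
  have hn : (0 : ℝ) < Fintype.card ι := Nat.cast_pos.2 Fintype.card_pos
  calc (∑ s, V (X (k + 1) s)) / (Fintype.card ι : ℝ) ^ (k + 1)
      = (∑ t : Fin k → ι, (∑ i, V (T i (X k t))) / Fintype.card ι) /
          (Fintype.card ι : ℝ) ^ k := by
        simp only [sum_pi_fin_succ, hX, ← sum_div, div_div, pow_succ']
    _ ≤ (∑ t : Fin k → ι, (ρ * V (X k t) + B)) / (Fintype.card ι : ℝ) ^ k := by
        gcongr with t
        exact hT _
    _ = _ := by
        simp only [sum_add_distrib, ← mul_sum, sum_const, card_univ, Fintype.card_fun,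
          Fintype.card_fin, nsmul_eq_mul, Nat.cast_pow]
        field_simp

lemma average_paths_le {ι E : Type*} [Fintype ι] [Nonempty ι]
    {X : ∀ k, (Fin k → ι) → E} {T : ι → E → E} {x₀ : E} (hX0 : ∀ s, X 0 s = x₀)
    (hX : ∀ k t i, X (k + 1) (Fin.snoc t i) = T i (X k t)) {V : E → ℝ} {ρ B : ℝ}
    (hT : ∀ x, (∑ i, V (T i x)) / Fintype.card ι ≤ ρ * V x + B) (hρ0 : 0 ≤ ρ) (hρ1 : ρ < 1)
    (hB : 0 ≤ B) (K : ℕ) :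
    (∑ s, V (X K s)) / (Fintype.card ι : ℝ) ^ K ≤ ρ ^ K * V x₀ + B / (1 - ρ) := by
  simpa [hX0] using le_pow_mul_add_div_of_le_mul_add
    (a := fun k => (∑ s, V (X k s)) / (Fintype.card ι : ℝ) ^ k) hρ0 hρ1 hB
    (average_paths_succ_le hX hT) K

/-- NGN-D convergence under the Polyak–Łojasiewicz condition. -/
theorem ngn_d_pl_convergence {d m : ℕ} (hm : 0 < m)
    (fS : Fin m → EuclideanSpace ℝ (Fin d) → ℝ)
    (gS : Fin m → EuclideanSpace ℝ (Fin d) → EuclideanSpace ℝ (Fin d))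
    (f : EuclideanSpace ℝ (Fin d) → ℝ)
    (gf : EuclideanSpace ℝ (Fin d) → EuclideanSpace ℝ (Fin d))
    (hf : ∀ x, f x = (∑ i, fS i x) / m)
    (hgS : ∀ i x, HasGradientAt (fS i) (gS i x) x)
    (hgf : ∀ x, HasGradientAt f (gf x) x)
    (hnonneg : ∀ i x, 0 ≤ fS i x)
    (L : Fin d → ℝ) (hL : ∀ j, 0 < L j)
    (hsmooth : ∀ i x h, fS i (x + h) ≤ fS i x + ⟪gS i x, h⟫ + (1/2) * ∑ j, L j * (h j) ^ 2)
    (σ : Fin d → ℝ)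
    (hvar : ∀ x j, (∑ i, (gS i x j - gf x j) ^ 2) / m ≤ σ j ^ 2)
    (fstar : ℝ) (hfstar : ∀ x, fstar ≤ f x)
    (μ : ℝ) (hμ : 0 < μ)
    (hPL : ∀ x, ‖gf x‖ ^ 2 ≥ 2 * μ * (f x - fstar))
    (c : Fin d → ℝ) (hc : ∀ j, 0 < c j)
    (hcL : ∀ j, c j ≤ min (1 / (2 * L j)) (6 / μ))
    (cmin : ℝ) (hcmin : IsLeast (Set.range c) cmin)
    (x0 : EuclideanSpace ℝ (Fin d))
    (X : ∀ k : ℕ, (Fin k → Fin m) → EuclideanSpace ℝ (Fin d))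
    (hX0 : ∀ s, X 0 s = x0)
    (hXs : ∀ (k : ℕ) (s : Fin (k + 1) → Fin m) (j : Fin d),
      X (k + 1) s j =
        X k (fun i => s i.castSucc) j -
          (c j / (1 + c j / (2 * fS (s (Fin.last k)) (X k (fun i => s i.castSucc))) *
              (gS (s (Fin.last k)) (X k (fun i => s i.castSucc)) j) ^ 2)) *
            gS (s (Fin.last k)) (X k (fun i => s i.castSucc)) j)
    (K : ℕ) :
    (∑ s : Fin K → Fin m, (f (X K s) - fstar)) / (m : ℝ) ^ K ≤
      (1 - μ * cmin / 6) ^ K * (f x0 - fstar) +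
        (9 / (μ * cmin)) * ∑ j, L j * (c j) ^ 2 * (σ j) ^ 2 := by
  have : Nonempty (Fin m) := ⟨⟨0, hm⟩⟩
  obtain ⟨j₀, rfl⟩ := hcmin.1
  have hμc : 0 < μ * c j₀ ∧ μ * c j₀ ≤ 6 :=
    ⟨mul_pos hμ (hc j₀), (le_div_iff₀' hμ).1 ((hcL j₀).trans (min_le_right _ _))⟩
  have hf_avg : f = fun y => (∑ i, fS i y) / Fintype.card (Fin m) := funext fun y => by simp [hf]
  have hgf_avg : gf = fun x => (Fintype.card (Fin m) : ℝ)⁻¹ • ∑ i, gS i x :=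
    funext fun x => (hgf x).unique (hf_avg ▸ hasGradientAt_average fun i => hgS i x)
  have hf_smooth : CoordSmooth f gf L := by
    rw [hf_avg, hgf_avg]
    exact CoordSmooth.average hsmooth
  have hstep (x) := hf_smooth.average_ngndStep_sub_le hsmooth hnonneg hL (fun j => (hc j).le)
    (fun j => (hcL j).trans (min_le_left _ _)) (hc j₀).le (fun j => hcmin.2 ⟨j, rfl⟩)
    (congrFun hgf_avg x) (by simpa using hvar x) (hPL x)
  have hX : ∀ k t i, X (k + 1) (Fin.snoc t i) = ngndStep c (fS i) (gS i) (X k t) :=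
    fun k t i => by
      ext j
      simp [hXs, ngndStep, ngnStepSize]
  have hB : 0 ≤ ∑ j, L j * c j ^ 2 * σ j ^ 2 := sum_nonneg fun j _ => by have := hL j; positivity
  have hK := average_paths_le (V := fun x => f x - fstar) (ρ := 1 - μ * c j₀ / 6) hX0 hX
    (fun x => (hstep x).trans (by linarith [mul_nonneg hμc.1.le (sub_nonneg.2 (hfstar x))]))
    (by linarith) (by linarith) hB K
  rw [Fintype.card_fin, sub_sub_cancel] at hK
  refine hK.trans (add_le_add_right ?_ _)
  rw [div_div_eq_mul_div, mul_comm, mul_div_right_comm]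
  gcongr
  · exact hμc.1.le
  · norm_num
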